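/- arXiv:1703.06058 — 7 statements merged into one kernel-verified Lean document; each statement's English description precedes it below -/
import Mathlib

section
/- Let N ≥ 1, V > 0, κ > 0, τ > 0, and for i = 1,…,N let φ_i ≥ 0, μ_i > 0, q_i ≥ 0. Let (u*, v*) belong to K = { (u,v) : u, v ≥ 0 componentwise, 0 ≤ φ_i + u_i − v_i < μ_i for all i, τ Σ_i v_i < 1, Σ_i u_i = Σ_i v_i } and set ω_i = φ_i + u*_i − v*_i, λ = Σ_i v*_i, d_i(ω) = μ_i/(μ_i − ω)², g(λ) = τ/(1 − τλ)². Suppose moreover that u*_i·v*_i = 0 for every i, and that there exists α ∈ ℝ such that for every i: if ω_i > φ_i then V·d_i(ω_i) + κ q_i = α; if ω_i = φ_i then α ≤ V·d_i(ω_i) + κ q_i ≤ α + V·g(λ); if 0 < ω_i < φ_i then V·d_i(ω_i) + κ q_i = α + V·g(λ); and if ω_i = 0 then V·d_i(0) + κ q_i ≥ α + V·g(λ). Then (u*, v*) is a global minimizer over K of F(u, v) = Σ_i [ V·(φ_i + u_i − v_i)/(μ_i − (φ_i + u_i − v_i)) + κ q_i (φ_i + u_i − v_i) ] + Vτ(Σ_i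 v_i)/(1 − τ Σ_i v_i). -/
/-! Each cost term is convex, so the objective lies above its linearization at `(u, v)`. With
`c i = V * d i (ω i) + κ * q i` and `γ = V * g lam`, the linear part in the direction
`(a - u, b - v)` equals `∑ i, ((c i - α) * (a i - u i) + (α + γ - c i) * (b i - v i))`, since the
multiplier `α` contributes nothing by flow balance. The Kuhn–Tucker conditions, together with
`u i * v i = 0`, make every summand nonnegative. -/

open Finset

/-- `m / (m - x) ^ 2` is the derivative of `x ↦ x / (m - x)`, convex on `(-∞, m)` when `0 ≤ m`. -/
lemma tangent_le_div_sub_self {m x w : ℝ} (hm : 0 ≤ m) (hx : x < m) (hw : w < m) :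
    w / (m - w) + m / (m - w) ^ 2 * (x - w) ≤ x / (m - x) := by
  have hmx : 0 < m - x := by linarith
  have hmw : 0 < m - w := by linarith
  have hgap : x / (m - x) - (w / (m - w) + m / (m - w) ^ 2 * (x - w))
      = m * (x - w) ^ 2 / ((m - x) * (m - w) ^ 2) := by
    field_simp
    ring
  have : 0 ≤ m * (x - w) ^ 2 / ((m - x) * (m - w) ^ 2) := by positivity
  linarith

lemma delay_cost_tangent_le {V m x w : ℝ} (k : ℝ) (hV : 0 ≤ V) (hm : 0 ≤ m) (hx : x < m)
    (hw : w < m) :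
    V * w / (m - w) + k * w + (V * (m / (m - w) ^ 2) + k) * (x - w)
      ≤ V * x / (m - x) + k * x := by
  have := mul_le_mul_of_nonneg_left (tangent_le_div_sub_self hm hx hw) hV
  calc V * w / (m - w) + k * w + (V * (m / (m - w) ^ 2) + k) * (x - w)
      = V * (w / (m - w) + m / (m - w) ^ 2 * (x - w)) + k * x := by ring
    _ ≤ V * (x / (m - x)) + k * x := by gcongr
    _ = V * x / (m - x) + k * x := by ring

lemma congestion_cost_tangent_le {V τ L M : ℝ} (hV : 0 ≤ V) (hL : τ * L < 1) (hM : τ * M < 1) :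
    V * τ * L / (1 - τ * L) + V * (τ / (1 - τ * L) ^ 2) * (M - L)
      ≤ V * τ * M / (1 - τ * M) := by
  have := mul_le_mul_of_nonneg_left (tangent_le_div_sub_self zero_le_one hM hL) hV
  calc V * τ * L / (1 - τ * L) + V * (τ / (1 - τ * L) ^ 2) * (M - L)
      = V * (τ * L / (1 - τ * L) + 1 / (1 - τ * L) ^ 2 * (τ * M - τ * L)) := by ring
    _ ≤ V * (τ * M / (1 - τ * M)) := by gcongr
    _ = V * τ * M / (1 - τ * M) := by ring

lemma kuhnTucker_term_nonneg {φ u v a b c α γ : ℝ} (hγ : 0 ≤ γ) (hu : 0 ≤ u) (hv : 0 ≤ v)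
    (ha : 0 ≤ a) (hb : 0 ≤ b) (huv : u * v = 0) (hω : 0 ≤ φ + u - v) (hω' : 0 ≤ φ + a - b)
    (h_gt : φ < φ + u - v → c = α) (h_eq : φ + u - v = φ → α ≤ c ∧ c ≤ α + γ)
    (h_lt : 0 < φ + u - v ∧ φ + u - v < φ → c = α + γ) (h_zero : φ + u - v = 0 → α + γ ≤ c) :
    0 ≤ (c - α) * (a - u) + (α + γ - c) * (b - v) := by
  rcases mul_eq_zero.mp huv with rfl | rfl
  · rcases hv.eq_or_lt with rfl | hv
    · obtain ⟨hαc, hcγ⟩ := h_eq (by ring)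
      nlinarith [mul_nonneg (sub_nonneg.2 hαc) ha, mul_nonneg (sub_nonneg.2 hcγ) hb]
    rcases hω.eq_or_lt with hω0 | hωpos
    · -- `ω = 0` forces `b - v ≤ a`, so the second term is at least `(α + γ - c) * a`.
      have hc := h_zero hω0.symm
      nlinarith [mul_nonneg (sub_nonneg.2 hc) (show 0 ≤ a - (b - v) by linarith)]
    · rw [h_lt ⟨hωpos, by linarith⟩]
      nlinarith
  · rcases hu.eq_or_lt with rfl | hu
    · obtain ⟨hαc, hcγ⟩ := h_eq (by ring)
      nlinarith [mul_nonneg (sub_nonneg.2 hαc) ha, mul_nonneg (sub_nonneg.2 hcγ) hb]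
    · rw [h_gt (by linarith)]
      nlinarith

lemma sum_marginal_eq_sum_kuhnTucker_terms {ι : Type*} [Fintype ι] (u v a b c : ι → ℝ)
    (α γ : ℝ) (huv : ∑ i, u i = ∑ i, v i) (hab : ∑ i, a i = ∑ i, b i) :
    ∑ i, c i * ((a i - b i) - (u i - v i)) + γ * (∑ i, b i - ∑ i, v i)
      = ∑ i, ((c i - α) * (a i - u i) + (α + γ - c i) * (b i - v i)) := by
  have hα : α * ((∑ i, a i - ∑ i, u i) - (∑ i, b i - ∑ i, v i)) = 0 := by
    rw [huv, hab]; ring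
  simp only [mul_sub, sub_mul, add_mul, mul_sum, sum_sub_distrib, sum_add_distrib] at hα ⊢
  linarith

theorem stmt_5_general (N : ℕ) (V κ τ : ℝ) (hV : 0 < V) (hτ : 0 < τ)
    (φ μ q : Fin N → ℝ)
    (K : Set ((Fin N → ℝ) × (Fin N → ℝ)))
    (hK : K = {p | (∀ i, 0 ≤ p.1 i) ∧ (∀ i, 0 ≤ p.2 i) ∧
        (∀ i, 0 ≤ φ i + p.1 i - p.2 i ∧ φ i + p.1 i - p.2 i < μ i) ∧
        τ * (∑ i, p.2 i) < 1 ∧ (∑ i, p.1 i) = ∑ i, p.2 i})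
    (F : (Fin N → ℝ) × (Fin N → ℝ) → ℝ)
    (hF : F = fun p =>
        (∑ i, (V * (φ i + p.1 i - p.2 i) / (μ i - (φ i + p.1 i - p.2 i)) +
                κ * q i * (φ i + p.1 i - p.2 i))) +
        V * τ * (∑ i, p.2 i) / (1 - τ * (∑ i, p.2 i)))
    (u v : Fin N → ℝ) (hmem : (u, v) ∈ K)
    (ω : Fin N → ℝ) (hω : ω = fun i => φ i + u i - v i)
    (lam : ℝ) (hlam : lam = ∑ i, v i)
    (d : Fin N → ℝ → ℝ) (hd : d = fun i x => μ i / (μ i - x) ^ 2)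
    (g : ℝ → ℝ) (hg : g = fun x => τ / (1 - τ * x) ^ 2)
    (hcompl : ∀ i, u i * v i = 0)
    (α : ℝ)
    (hKT : ∀ i,
      (φ i < ω i → V * d i (ω i) + κ * q i = α) ∧
      (ω i = φ i →
        α ≤ V * d i (ω i) + κ * q i ∧ V * d i (ω i) + κ * q i ≤ α + V * g lam) ∧
      (0 < ω i ∧ ω i < φ i → V * d i (ω i) + κ * q i = α + V * g lam) ∧
      (ω i = 0 → α + V * g lam ≤ V * d i 0 + κ * q i)) :
    ∀ p ∈ K, F (u, v) ≤ F p := by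
  rintro ⟨a, b⟩ hp
  subst hK hF hω hlam hd hg
  obtain ⟨hu, hv, hωuv, hτv, hbal⟩ := hmem
  obtain ⟨ha, hb, hωab, hτb, hbal'⟩ := hp
  dsimp only at *
  set c : Fin N → ℝ := fun i => V * (μ i / (μ i - (φ i + u i - v i)) ^ 2) + κ * q i
  set γ := V * (τ / (1 - τ * ∑ i, v i) ^ 2)
  have hdelay (i : Fin N) : V * (φ i + u i - v i) / (μ i - (φ i + u i - v i))
      + κ * q i * (φ i + u i - v i) + c i * ((a i - b i) - (u i - v i)) ≤
      V * (φ i + a i - b i) / (μ i - (φ i + a i - b i)) + κ * q i * (φ i + a i - b i) := by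
    convert delay_cost_tangent_le (κ * q i) hV.le (by linarith [hωuv i]) (hωab i).2 (hωuv i).2
      using 3
    ring
  have hcongestion := congestion_cost_tangent_le hV.le hτv hτb
  have hfirst_order : 0 ≤ ∑ i, c i * ((a i - b i) - (u i - v i)) + γ * (∑ i, b i - ∑ i, v i) := by
    rw [sum_marginal_eq_sum_kuhnTucker_terms u v a b c α γ hbal hbal']
    refine sum_nonneg fun i _ => ?_
    obtain ⟨h_gt, h_eq, h_lt, h_zero⟩ := hKT i
    exact kuhnTucker_term_nonneg (by positivity) (hu i) (hv i) (ha i) (hb i) (hcompl i)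
      (hωuv i).1 (hωab i).1 h_gt h_eq h_lt fun h0 => by simpa [c, h0] using h_zero h0
  have hdelay_sum := sum_le_sum fun i (_ : i ∈ univ) => hdelay i
  simp only [sum_add_distrib] at hdelay_sum ⊢
  linarith

/-- sufficiency of the first-order (Kuhn–Tucker) conditions: a
feasible point `(u*, v*)` with complementary inbound/outbound traffic that
satisfies the marginal-cost conditions of Theorem 1 for some multiplier `α` is
a global minimizer of the per-slot objective `F` over the feasible set `K`. -/
theorem stmt_5 (N : ℕ) (hN : 1 ≤ N) (V κ τ : ℝ) (hV : 0 < V) (hκ : 0 < κ) (hτ : 0 < τ)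
    (φ μ q : Fin N → ℝ) (hφ : ∀ i, 0 ≤ φ i) (hμ : ∀ i, 0 < μ i) (hq : ∀ i, 0 ≤ q i)
    (K : Set ((Fin N → ℝ) × (Fin N → ℝ)))
    (hK : K = {p | (∀ i, 0 ≤ p.1 i) ∧ (∀ i, 0 ≤ p.2 i) ∧
        (∀ i, 0 ≤ φ i + p.1 i - p.2 i ∧ φ i + p.1 i - p.2 i < μ i) ∧
        τ * (∑ i, p.2 i) < 1 ∧ (∑ i, p.1 i) = ∑ i, p.2 i})
    (F : (Fin N → ℝ) × (Fin N → ℝ) → ℝ)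
    (hF : F = fun p =>
        (∑ i, (V * (φ i + p.1 i - p.2 i) / (μ i - (φ i + p.1 i - p.2 i)) +
                κ * q i * (φ i + p.1 i - p.2 i))) +
        V * τ * (∑ i, p.2 i) / (1 - τ * (∑ i, p.2 i)))
    (u v : Fin N → ℝ) (hmem : (u, v) ∈ K)
    (ω : Fin N → ℝ) (hω : ω = fun i => φ i + u i - v i)
    (lam : ℝ) (hlam : lam = ∑ i, v i)
    (d : Fin N → ℝ → ℝ) (hd : d = fun i x => μ i / (μ i - x) ^ 2)
    (g : ℝ → ℝ) (hg : g = fun x => τ / (1 - τ * x) ^ 2)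
    (hcompl : ∀ i, u i * v i = 0)
    (α : ℝ)
    (hKT : ∀ i,
      (φ i < ω i → V * d i (ω i) + κ * q i = α) ∧
      (ω i = φ i →
        α ≤ V * d i (ω i) + κ * q i ∧ V * d i (ω i) + κ * q i ≤ α + V * g lam) ∧
      (0 < ω i ∧ ω i < φ i → V * d i (ω i) + κ * q i = α + V * g lam) ∧
      (ω i = 0 → α + V * g lam ≤ V * d i 0 + κ * q i)) :
    ∀ p ∈ K, F (u, v) ≤ F p :=
  stmt_5_general N V κ τ hV hτ φ μ q K hK F hF u v hmem ω hω lam hlam d hd g hg hcompl α hKT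
end

section
/- Let N ≥ 2, V > 0, κ > 0, τ > 0, φ_i ≥ 0, μ_i > 0, q_i ≥ 0 for i = 1,…,N. Let β ∈ ℝ^{N×N} be a feasible peer offloading profile, i.e., β_{ij} ≥ 0 for all i,j, Σ_j β_{ij} = φ_i for all i, ω_j(β) = Σ_i β_{ij} < μ_j for all j, and τ·λ(β) < 1 where λ(β) = Σ_i Σ_{j≠i} β_{ij}. Suppose there exist an index i and indices j ≠ i and k ≠ i with β_{ij} > 0 and β_{ki} > 0 (SBS i simultaneously offloads workload and receives workload). Then there exists a feasible profile β′ with ω_j(β′) = ω_j(β) for every j, λ(β′) < λ(β), and strictly smaller objective J(β′) < J(β), where J(β) = Σ_j V·ω_j(β)/(μ_j − ω_j(β)) + V·τ·λ(β)/(1 − τ·λ(β)) + Σ_j κ·q_j·ω_j(β). -/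
/-! Move `ε = min β_ij β_ki` of the flow `k → i → j` onto the direct edge `k → j`, letting `i`
keep `ε` more of its own tasks. This is the rank-one update `ε (eᵢ - eₖ)(eᵢ - eⱼ)ᵀ`, and both
factors sum to zero, so every row and column sum is unchanged: conservation, stability and the
workloads `ω_j` survive, and the computation and energy terms of `J` do not move. The diagonal
grows by at least `ε`, and LAN traffic is the total minus the diagonal, so it drops; since
`t ↦ t / (1 - t)` is strictly increasing below `1`, so does the LAN delay term. -/

open Finset

section Shortcut

variable {ι : Type*} [DecidableEq ι]

def shortcut (β : ι → ι → ℝ) (i j k : ι) (ε : ℝ) (a b : ι) : ℝ :=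
  β a b + ε * (Pi.single i 1 - Pi.single k 1 : ι → ℝ) a *
    (Pi.single i 1 - Pi.single j 1 : ι → ℝ) b

variable (β : ι → ι → ℝ) (i j k : ι) (ε : ℝ)

theorem shortcut_nonneg (hpos : ∀ a b, 0 ≤ β a b) (hji : j ≠ i) (hki : k ≠ i) (hε : 0 ≤ ε)
    (hεij : ε ≤ β i j) (hεki : ε ≤ β k i) (a b : ι) : 0 ≤ shortcut β i j k ε a b := by
  have hab := hpos a b
  simp only [shortcut, Pi.sub_apply, Pi.single_apply]
  split_ifs <;> subst_vars <;> first | contradiction | linarith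

variable [Fintype ι]

theorem sum_sum_erase_eq_sub_sum_diag (f : ι → ι → ℝ) :
    ∑ a, ∑ b ∈ univ.erase a, f a b = ∑ a, ∑ b, f a b - ∑ a, f a a := by
  rw [← sum_sub_distrib]
  exact sum_congr rfl fun a _ => sum_erase_eq_sub (mem_univ a)

theorem sum_shortcut_row (a : ι) : ∑ b, shortcut β i j k ε a b = ∑ b, β a b := by
  simp [shortcut, sum_add_distrib, ← mul_sum]

theorem sum_shortcut_col (b : ι) : ∑ a, shortcut β i j k ε a b = ∑ a, β a b := by
  simp [shortcut, sum_add_distrib, ← sum_mul, ← mul_sum]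

theorem sum_shortcut_diag (hji : j ≠ i) (hki : k ≠ i) :
    ∑ a, shortcut β i j k ε a a = ∑ a, β a a + ε * (1 + if j = k then 1 else 0) := by
  simp only [shortcut, sum_add_distrib, mul_assoc, ← mul_sum]
  congr 2
  simp [mul_sub, Pi.single_apply, hji, hki.symm]

theorem sum_sum_erase_shortcut_lt (hji : j ≠ i) (hki : k ≠ i) (hε : 0 < ε) :
    ∑ a, ∑ b ∈ univ.erase a, shortcut β i j k ε a b < ∑ a, ∑ b ∈ univ.erase a, β a b := by
  simp only [sum_sum_erase_eq_sub_sum_diag, sum_shortcut_row, sum_shortcut_diag β i j k ε hji hki]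
  have hjk : (0 : ℝ) ≤ if j = k then 1 else 0 := by positivity
  nlinarith

end Shortcut

theorem mul_div_one_sub_mul_lt_of_lt {c x y : ℝ} (hc : 0 < c) (hxy : x < y) (hy : c * y < 1) :
    c * x / (1 - c * x) < c * y / (1 - c * y) := by
  have hx : c * x < c * y := mul_lt_mul_of_pos_left hxy hc
  rw [div_lt_div_iff₀ (by linarith) (by linarith)]
  nlinarith

theorem stmt_6_general (N : ℕ) (V κ τ : ℝ) (hV : 0 < V) (hτ : 0 < τ)
    (φ μ q : Fin N → ℝ)
    (β : Fin N → Fin N → ℝ)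
    (hpos : ∀ i j, 0 ≤ β i j)
    (hcons : ∀ i, (∑ j, β i j) = φ i)
    (hstab : ∀ j, (∑ i, β i j) < μ j)
    (hlan : τ * (∑ i, ∑ j ∈ Finset.univ.erase i, β i j) < 1)
    (i j k : Fin N) (hji : j ≠ i) (hki : k ≠ i)
    (hβij : 0 < β i j) (hβki : 0 < β k i) :
    ∃ β' : Fin N → Fin N → ℝ,
      (∀ a b, 0 ≤ β' a b) ∧
      (∀ a, (∑ b, β' a b) = φ a) ∧
      (∀ b, (∑ a, β' a b) < μ b) ∧
      τ * (∑ a, ∑ b ∈ Finset.univ.erase a, β' a b) < 1 ∧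
      (∀ b, (∑ a, β' a b) = ∑ a, β a b) ∧
      (∑ a, ∑ b ∈ Finset.univ.erase a, β' a b) <
        (∑ a, ∑ b ∈ Finset.univ.erase a, β a b) ∧
      (∑ b, V * (∑ a, β' a b) / (μ b - ∑ a, β' a b)) +
          V * τ * (∑ a, ∑ b ∈ Finset.univ.erase a, β' a b) /
            (1 - τ * (∑ a, ∑ b ∈ Finset.univ.erase a, β' a b)) +
          (∑ b, κ * q b * (∑ a, β' a b)) <
        (∑ b, V * (∑ a, β a b) / (μ b - ∑ a, β a b)) +
          V * τ * (∑ a, ∑ b ∈ Finset.univ.erase a, β a b) /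
            (1 - τ * (∑ a, ∑ b ∈ Finset.univ.erase a, β a b)) +
          (∑ b, κ * q b * (∑ a, β a b)) := by
  set ε := min (β i j) (β k i)
  have hε : 0 < ε := lt_min hβij hβki
  have hcol := sum_shortcut_col β i j k ε
  have hlt := sum_sum_erase_shortcut_lt β i j k ε hji hki hε
  have hdelay := mul_div_one_sub_mul_lt_of_lt hτ hlt hlan
  refine ⟨shortcut β i j k ε,
    shortcut_nonneg β i j k ε hpos hji hki hε.le (min_le_left _ _) (min_le_right _ _),
    fun a => (sum_shortcut_row β i j k ε a).trans (hcons a), fun b => (hcol b).trans_lt (hstab b),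
    (mul_lt_mul_of_pos_left hlt hτ).trans hlan, hcol, hlt, ?_⟩
  simp only [hcol, add_lt_add_iff_right, add_lt_add_iff_left]
  simpa only [mul_assoc, mul_div_assoc] using mul_lt_mul_of_pos_left hdelay hV

/-- if in a feasible peer offloading profile some SBS `i` both
offloads workload (to some `j ≠ i`) and receives workload (from some `k ≠ i`),
then there is another feasible profile with the same post-offloading workloads,
strictly less LAN traffic, and strictly smaller per-slot objective. -/
theorem stmt_6 (N : ℕ) (hN : 2 ≤ N) (V κ τ : ℝ) (hV : 0 < V) (hκ : 0 < κ) (hτ : 0 < τ)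
    (φ μ q : Fin N → ℝ) (hφ : ∀ i, 0 ≤ φ i) (hμ : ∀ i, 0 < μ i) (hq : ∀ i, 0 ≤ q i)
    (β : Fin N → Fin N → ℝ)
    (hpos : ∀ i j, 0 ≤ β i j)
    (hcons : ∀ i, (∑ j, β i j) = φ i)
    (hstab : ∀ j, (∑ i, β i j) < μ j)
    (hlan : τ * (∑ i, ∑ j ∈ Finset.univ.erase i, β i j) < 1)
    (i j k : Fin N) (hji : j ≠ i) (hki : k ≠ i)
    (hβij : 0 < β i j) (hβki : 0 < β k i) :
    ∃ β' : Fin N → Fin N → ℝ,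
      (∀ a b, 0 ≤ β' a b) ∧
      (∀ a, (∑ b, β' a b) = φ a) ∧
      (∀ b, (∑ a, β' a b) < μ b) ∧
      τ * (∑ a, ∑ b ∈ Finset.univ.erase a, β' a b) < 1 ∧
      (∀ b, (∑ a, β' a b) = ∑ a, β a b) ∧
      (∑ a, ∑ b ∈ Finset.univ.erase a, β' a b) <
        (∑ a, ∑ b ∈ Finset.univ.erase a, β a b) ∧
      (∑ b, V * (∑ a, β' a b) / (μ b - ∑ a, β' a b)) +
          V * τ * (∑ a, ∑ b ∈ Finset.univ.erase a, β' a b) /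
            (1 - τ * (∑ a, ∑ b ∈ Finset.univ.erase a, β' a b)) +
          (∑ b, κ * q b * (∑ a, β' a b)) <
        (∑ b, V * (∑ a, β a b) / (μ b - ∑ a, β a b)) +
          V * τ * (∑ a, ∑ b ∈ Finset.univ.erase a, β a b) /
            (1 - τ * (∑ a, ∑ b ∈ Finset.univ.erase a, β a b)) +
          (∑ b, κ * q b * (∑ a, β a b)) :=
  stmt_6_general N V κ τ hV hτ φ μ q β hpos hcons hstab hlan i j k hji hki hβij hβki
end

section
/- Let N ≥ 1, let B ⊆ ℝ^{N×N} be nonempty, and let c_{ij} : B → ℝ and c̃_{ij} : B → ℝ be given for all i, j ∈ {1,…,N}. Define C(β) = Σ_{i=1}^N Σ_{j=1}^N β_{ij}·c_{ij}(β). Suppose β^{NE} ∈ B satisfies the variational inequality Σ_{i,j} c̃_{ij}(β^{NE})·(β_{ij} − β^{NE}_{ij}) ≥ 0 for all β ∈ B, and suppose ρ ∈ [0, 1) satisfies, for every j ∈ {1,…,N} and every β, β̂ ∈ B, Σ_{i=1}^N [ (c̃_{ij}(β) − c_{ij}(β̂))·β̂_{ij} + (c_{ij}(β) − c̃_{ij}(β))·β_{ij}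 ] ≤ ρ·Σ_{i=1}^N β_{ij}·c_{ij}(β). Then for every β̂ ∈ B, C(β^{NE}) ≤ ρ·C(β^{NE}) + C(β̂); consequently C(β^{NE}) ≤ C(β̂)/(1 − ρ), and in particular the price of anarchy C(β^{NE})/C(β*) for the system-optimal β* ∈ B is at most 1/(1 − ρ) whenever C(β*) > 0. -/
/-!
At a solution `β` of the variational inequality, summing the column-wise condition over `j`
and regrouping gives `VI(β, β̂) + C(β) - C(β̂) ≤ ρ C(β)`, where `VI(β, β̂) ≥ 0` is the
variational-inequality term. Hence `C(β) ≤ ρ C(β) + C(β̂)`, and since `ρ < 1` this rearranges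
to `C(β) ≤ C(β̂) / (1 - ρ)`.
-/

open Finset

section SmoothnessBound

variable {ι κ : Type*} [Fintype ι] [Fintype κ]

def totalCost (c : ι → κ → (ι → κ → ℝ) → ℝ) (β : ι → κ → ℝ) : ℝ :=
  ∑ i, ∑ j, β i j * c i j β

lemma sum_smoothness_terms_eq (c ctilde : ι → κ → (ι → κ → ℝ) → ℝ) (β βhat : ι → κ → ℝ) :
    ∑ j, ∑ i, ((ctilde i j β - c i j βhat) * βhat i j + (c i j β - ctilde i j β) * β i j) =
      ∑ i, ∑ j, ctilde i j β * (βhat i j - β i j) + (totalCost c β - totalCost c βhat) := by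
  rw [sum_comm, totalCost, totalCost, ← sum_sub_distrib, ← sum_add_distrib]
  refine sum_congr rfl fun i _ => ?_
  rw [← sum_sub_distrib, ← sum_add_distrib]
  exact sum_congr rfl fun j _ => by ring

lemma totalCost_le_mul_add_of_smooth (c ctilde : ι → κ → (ι → κ → ℝ) → ℝ)
    {β βhat : ι → κ → ℝ} {ρ : ℝ}
    (hVI : 0 ≤ ∑ i, ∑ j, ctilde i j β * (βhat i j - β i j))
    (hρ : ∀ j, ∑ i, ((ctilde i j β - c i j βhat) * βhat i j +
      (c i j β - ctilde i j β) * β i j) ≤ ρ * ∑ i, β i j * c i j β) :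
    totalCost c β ≤ ρ * totalCost c β + totalCost c βhat := by
  have hsum := sum_le_sum fun j (_ : j ∈ univ) => hρ j
  have hcols : ∑ j, ρ * ∑ i, β i j * c i j β = ρ * totalCost c β := by
    rw [← mul_sum, totalCost, sum_comm]
  rw [sum_smoothness_terms_eq, hcols] at hsum
  linarith

end SmoothnessBound

lemma le_div_one_sub_of_le_mul_add {x y ρ : ℝ} (hρ : ρ < 1) (h : x ≤ ρ * x + y) :
    x ≤ y / (1 - ρ) := by
  rw [le_div_iff₀ (sub_pos.mpr hρ)]
  linarith

theorem stmt_12_general (N : ℕ)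
    (B : Set (Fin N → Fin N → ℝ))
    (c ctilde : Fin N → Fin N → (Fin N → Fin N → ℝ) → ℝ)
    (Cost : (Fin N → Fin N → ℝ) → ℝ)
    (hCost : Cost = fun β => ∑ i, ∑ j, β i j * c i j β)
    (βNE : Fin N → Fin N → ℝ) (hNE : βNE ∈ B)
    (hVI : ∀ β ∈ B, 0 ≤ ∑ i, ∑ j, ctilde i j βNE * (β i j - βNE i j))
    (ρ : ℝ) (hρ1 : ρ < 1)
    (hρ : ∀ j, ∀ β ∈ B, ∀ βhat ∈ B,
      (∑ i, ((ctilde i j β - c i j βhat) * βhat i j +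
             (c i j β - ctilde i j β) * β i j)) ≤
        ρ * ∑ i, β i j * c i j β) :
    (∀ βhat ∈ B, Cost βNE ≤ ρ * Cost βNE + Cost βhat) ∧
    (∀ βhat ∈ B, Cost βNE ≤ Cost βhat / (1 - ρ)) ∧
    (∀ βstar ∈ B, (∀ β ∈ B, Cost βstar ≤ Cost β) → 0 < Cost βstar →
      Cost βNE / Cost βstar ≤ 1 / (1 - ρ)) := by
  obtain rfl : Cost = totalCost c := hCost
  have hsmooth : ∀ βhat ∈ B, totalCost c βNE ≤ ρ * totalCost c βNE + totalCost c βhat :=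
    fun βhat hβhat =>
      totalCost_le_mul_add_of_smooth c ctilde (hVI βhat hβhat) fun j => hρ j βNE hNE βhat hβhat
  have hbound : ∀ βhat ∈ B, totalCost c βNE ≤ totalCost c βhat / (1 - ρ) :=
    fun βhat hβhat => le_div_one_sub_of_le_mul_add hρ1 (hsmooth βhat hβhat)
  refine ⟨hsmooth, hbound, fun βstar hβstar _ hpos => ?_⟩
  rw [div_le_iff₀ hpos, one_div_mul_eq_div]
  exact hbound βstar hβstar

/-- bound on the price of anarchy of the peer offloading game
(Theorem 5 of the paper): if the Nash equilibrium satisfies the variational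
inequality and `ρ ∈ [0,1)` satisfies the column-wise smoothness condition, then
`C(β^NE) ≤ ρ·C(β^NE) + C(β̂)` for every `β̂ ∈ B`, hence
`C(β^NE) ≤ C(β̂)/(1−ρ)` and the price of anarchy is at most `1/(1−ρ)`. -/
theorem stmt_12 (N : ℕ) (hN : 1 ≤ N)
    (B : Set (Fin N → Fin N → ℝ)) (hBne : B.Nonempty)
    (c ctilde : Fin N → Fin N → (Fin N → Fin N → ℝ) → ℝ)
    (Cost : (Fin N → Fin N → ℝ) → ℝ)
    (hCost : Cost = fun β => ∑ i, ∑ j, β i j * c i j β)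
    (βNE : Fin N → Fin N → ℝ) (hNE : βNE ∈ B)
    (hVI : ∀ β ∈ B, 0 ≤ ∑ i, ∑ j, ctilde i j βNE * (β i j - βNE i j))
    (ρ : ℝ) (hρ0 : 0 ≤ ρ) (hρ1 : ρ < 1)
    (hρ : ∀ j, ∀ β ∈ B, ∀ βhat ∈ B,
      (∑ i, ((ctilde i j β - c i j βhat) * βhat i j +
             (c i j β - ctilde i j β) * β i j)) ≤
        ρ * ∑ i, β i j * c i j β) :
    (∀ βhat ∈ B, Cost βNE ≤ ρ * Cost βNE + Cost βhat) ∧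
    (∀ βhat ∈ B, Cost βNE ≤ Cost βhat / (1 - ρ)) ∧
    (∀ βstar ∈ B, (∀ β ∈ B, Cost βstar ≤ Cost β) → 0 < Cost βstar →
      Cost βNE / Cost βstar ≤ 1 / (1 - ρ)) :=
  stmt_12_general N B c ctilde Cost hCost βNE hNE hVI ρ hρ1 hρ
end

section
/- Let N ≥ 1, V > 0, E_max ∈ ℝ, D^{opt} ∈ ℝ, and for i = 1,…,N let Ē_i ∈ ℝ. Let E_i : ℕ → ℝ and D : ℕ → ℝ be sequences, and define queues q_i : ℕ → ℝ by q_i(0) = 0 and q_i(t+1) = max(q_i(t) + E_i(t) − Ē_i, 0). Assume: (i) (E_i(t) − Ē_i)² ≤ (E_max − Ē_i)² for all i, t; and (ii) for every t, V·D(t) + Σ_{i=1}^N q_i(t)·(E_i(t) − Ē_i) ≤ V·D^{opt}. Then for every T ≥ 1, (1/T)·Σ_{t=0}^{T−1} D(t) ≤ D^{opt} + B/V, where B = (1/2)·Σ_{i=1}^N (E_max − Ē_i)². -/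
/-!
Lyapunov drift-plus-penalty. With `L = ½ Σᵢ qᵢ²`, the queue update `q ↦ max (q + a) 0`
never makes `q²` exceed `(q + a)²`, so `L(t+1) - L(t) ≤ B + Σᵢ qᵢ(t) (Eᵢ(t) - Ēᵢ)`.
Adding `V·D(t)` and using (ii) gives `L(t+1) - L(t) + V·D(t) ≤ B + V·D^opt`; summing over
`t < T` telescopes, and `L(0) = 0 ≤ L(T)` leaves `V Σ_{t<T} D(t) ≤ T (B + V D^opt)`.
-/

open Finset

theorem sq_max_add_zero_le (q a : ℝ) : max (q + a) 0 ^ 2 ≤ q ^ 2 + 2 * q * a + a ^ 2 :=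
  calc max (q + a) 0 ^ 2 ≤ (q + a) ^ 2 := by
        rcases le_total (q + a) 0 with h | h
        · rw [max_eq_right h, zero_pow two_ne_zero]; exact sq_nonneg _
        · rw [max_eq_left h]
    _ = q ^ 2 + 2 * q * a + a ^ 2 := by ring

theorem half_sum_sq_max_add_zero_sub_le {ι : Type*} (s : Finset ι) (q a c : ι → ℝ)
    (hac : ∀ i ∈ s, a i ^ 2 ≤ c i ^ 2) :
    (1 / 2) * ∑ i ∈ s, max (q i + a i) 0 ^ 2 - (1 / 2) * ∑ i ∈ s, q i ^ 2 ≤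
      (1 / 2) * ∑ i ∈ s, c i ^ 2 + ∑ i ∈ s, q i * a i := by
  have h : ∑ i ∈ s, max (q i + a i) 0 ^ 2 ≤
      ∑ i ∈ s, (q i ^ 2 + 2 * (q i * a i) + c i ^ 2) :=
    sum_le_sum fun i hi => by linarith [sq_max_add_zero_le (q i) (a i), hac i hi]
  rw [sum_add_distrib, sum_add_distrib, ← mul_sum] at h
  linarith

theorem sum_div_le_of_drift_plus_penalty_le {L p : ℕ → ℝ} {V B pOpt : ℝ} (hV : 0 < V)
    (hL0 : L 0 = 0) (hL : ∀ t, 0 ≤ L t)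
    (hdrift : ∀ t, L (t + 1) - L t + V * p t ≤ B + V * pOpt) {T : ℕ} (hT : 0 < T) :
    (∑ t ∈ range T, p t) / T ≤ pOpt + B / V := by
  have hsum : L T - L 0 + V * ∑ t ∈ range T, p t ≤ T * (B + V * pOpt) := by
    have h := sum_le_sum fun t (_ : t ∈ range T) => hdrift t
    rwa [sum_add_distrib, sum_range_sub, ← mul_sum, sum_const, card_range, nsmul_eq_mul] at h
  have hT' : (0 : ℝ) < T := by exact_mod_cast hT
  rw [div_le_iff₀ hT', ← mul_le_mul_iff_of_pos_left hV]
  calc V * ∑ t ∈ range T, p t ≤ T * (B + V * pOpt) := by linarith [hL T]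
    _ = V * ((pOpt + B / V) * T) := by field_simp; ring

theorem stmt_13_general (N : ℕ) (V : ℝ) (hV : 0 < V) (Emax Dopt : ℝ)
    (Ebar : Fin N → ℝ) (E : Fin N → ℕ → ℝ) (D : ℕ → ℝ)
    (q : Fin N → ℕ → ℝ)
    (hq0 : ∀ i, q i 0 = 0)
    (hqrec : ∀ i t, q i (t + 1) = max (q i t + E i t - Ebar i) 0)
    (hE : ∀ i t, (E i t - Ebar i) ^ 2 ≤ (Emax - Ebar i) ^ 2)
    (hdp : ∀ t, V * D t + (∑ i, q i t * (E i t - Ebar i)) ≤ V * Dopt) :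
    ∀ T : ℕ, 1 ≤ T →
      (∑ t ∈ Finset.range T, D t) / (T : ℝ) ≤
        Dopt + ((1 / 2) * ∑ i, (Emax - Ebar i) ^ 2) / V := by
  intro T hT
  refine sum_div_le_of_drift_plus_penalty_le (L := fun t => (1 / 2) * ∑ i, q i t ^ 2) hV
    (by simp [hq0]) (fun t => by positivity) (fun t => ?_) hT
  have hdrift := half_sum_sq_max_add_zero_sub_le univ (q · t) (fun i => E i t - Ebar i)
    (fun i => Emax - Ebar i) fun i _ => hE i t
  simp only [hqrec, add_sub_assoc]
  linarith [hdp t]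

/-- deterministic core of Theorem 2's delay bound for OPEN: if the
per-slot drift-plus-penalty value is dominated by a comparison policy with
system delay `D^opt` and no energy surplus, then the time-averaged system delay
is within `B/V` of `D^opt`. -/
theorem stmt_13 (N : ℕ) (hN : 1 ≤ N) (V : ℝ) (hV : 0 < V) (Emax Dopt : ℝ)
    (Ebar : Fin N → ℝ) (E : Fin N → ℕ → ℝ) (D : ℕ → ℝ)
    (q : Fin N → ℕ → ℝ)
    (hq0 : ∀ i, q i 0 = 0)
    (hqrec : ∀ i t, q i (t + 1) = max (q i t + E i t - Ebar i) 0)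
    (hE : ∀ i t, (E i t - Ebar i) ^ 2 ≤ (Emax - Ebar i) ^ 2)
    (hdp : ∀ t, V * D t + (∑ i, q i t * (E i t - Ebar i)) ≤ V * Dopt) :
    ∀ T : ℕ, 1 ≤ T →
      (∑ t ∈ Finset.range T, D t) / (T : ℝ) ≤
        Dopt + ((1 / 2) * ∑ i, (Emax - Ebar i) ^ 2) / V :=
  stmt_13_general N V hV Emax Dopt Ebar E D q hq0 hqrec hE hdp
end

section
/- Let N ≥ 1, V > 0, ε > 0, E_max ∈ ℝ, Ψ ∈ ℝ, D_{lb} ∈ ℝ, and for i = 1,…,N let Ē_i ∈ ℝ. Let E_i : ℕ → ℝ and D : ℕ → ℝ be sequences with D(t) ≥ D_{lb} for all t, and define queues q_i : ℕ → ℝ by q_i(0) = 0 and q_i(t+1) = max(q_i(t) + E_i(t) − Ē_i, 0). Assume: (i) (E_i(t) − Ē_i)² ≤ (E_max − Ē_i)² for all i, t; and (ii) for every t, V·D(t) + Σ_{i=1}^N q_i(t)·(E_i(t) − Ē_i) ≤ V·Ψ − ε·Σ_{i=1}^N q_i(t). Then for every T ≥ 1, (1/T)·Σ_{t=0}^{T−1}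 Σ_{i=1}^N q_i(t) ≤ (B + V·(Ψ − D_{lb}))/ε, where B = (1/2)·Σ_{i=1}^N (E_max − Ē_i)². -/
/-!
Lyapunov drift-plus-penalty argument. With `L(t) = ½ Σᵢ qᵢ(t)²`, the queue recursion gives
`L(t+1) − L(t) ≤ Σᵢ qᵢ(t)(Eᵢ(t) − Ēᵢ) + B`; combined with (ii) and `D(t) ≥ D_lb` this yields
`ε Σᵢ qᵢ(t) ≤ B + V(Ψ − D_lb) + L(t) − L(t+1)`. Summing over `t < T` telescopes, and
`L(0) = 0 ≤ L(T)` leaves `ε Σₜ Σᵢ qᵢ(t) ≤ T (B + V(Ψ − D_lb))`.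
-/

open Finset

theorem sq_max_add_zero_sub_sq_le (x a : ℝ) : max (x + a) 0 ^ 2 - x ^ 2 ≤ 2 * x * a + a ^ 2 := by
  rcases le_total 0 (x + a) with h | h
  · rw [max_eq_left h]
    linarith
  · rw [max_eq_right h]
    nlinarith [sq_nonneg (x + a)]

theorem sum_range_le_of_drift_le {f L : ℕ → ℝ} {C : ℝ} (hdrift : ∀ t, f t ≤ C + (L t - L (t + 1)))
    (T : ℕ) (hL0 : L 0 = 0) (hLT : 0 ≤ L T) : ∑ t ∈ range T, f t ≤ T * C := by
  calc ∑ t ∈ range T, f t ≤ ∑ t ∈ range T, (C + (L t - L (t + 1))) :=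
        sum_le_sum fun t _ => hdrift t
    _ = T * C + (L 0 - L T) := by
        rw [sum_add_distrib, sum_const, card_range, nsmul_eq_mul, sum_range_sub']
    _ ≤ T * C := by linarith

section Lyapunov

variable {ι : Type*} [Fintype ι]

noncomputable def lyapunov (q : ι → ℕ → ℝ) (t : ℕ) : ℝ := (1 / 2) * ∑ i, q i t ^ 2

theorem lyapunov_nonneg (q : ι → ℕ → ℝ) (t : ℕ) : 0 ≤ lyapunov q t := by
  unfold lyapunov
  positivity

theorem lyapunov_eq_zero_of_forall (q : ι → ℕ → ℝ) {t : ℕ} (h : ∀ i, q i t = 0) :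
    lyapunov q t = 0 := by
  simp [lyapunov, h]

theorem lyapunov_succ_sub_le (q a : ι → ℕ → ℝ) (t : ℕ)
    (hrec : ∀ i, q i (t + 1) = max (q i t + a i t) 0) :
    lyapunov q (t + 1) - lyapunov q t ≤ ∑ i, q i t * a i t + (1 / 2) * ∑ i, a i t ^ 2 := by
  have hterm : ∀ i, q i (t + 1) ^ 2 - q i t ^ 2 ≤ 2 * (q i t * a i t) + a i t ^ 2 := fun i => by
    rw [hrec i, ← mul_assoc]
    exact sq_max_add_zero_sub_sq_le _ _
  have hsum := sum_le_sum fun i (_ : i ∈ univ) => hterm i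
  simp only [sum_sub_distrib, sum_add_distrib, ← mul_sum] at hsum
  unfold lyapunov
  linarith

end Lyapunov

theorem stmt_14_general (N : ℕ) (V ε : ℝ) (hV : 0 < V) (hε : 0 < ε)
    (Emax Ψ Dlb : ℝ) (Ebar : Fin N → ℝ) (E : Fin N → ℕ → ℝ) (D : ℕ → ℝ)
    (hD : ∀ t, Dlb ≤ D t)
    (q : Fin N → ℕ → ℝ)
    (hq0 : ∀ i, q i 0 = 0)
    (hqrec : ∀ i t, q i (t + 1) = max (q i t + E i t - Ebar i) 0)
    (hE : ∀ i t, (E i t - Ebar i) ^ 2 ≤ (Emax - Ebar i) ^ 2)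
    (hdp : ∀ t, V * D t + (∑ i, q i t * (E i t - Ebar i)) ≤
      V * Ψ - ε * ∑ i, q i t) :
    ∀ T : ℕ, 1 ≤ T →
      (∑ t ∈ Finset.range T, ∑ i, q i t) / (T : ℝ) ≤
        (((1 / 2) * ∑ i, (Emax - Ebar i) ^ 2) + V * (Ψ - Dlb)) / ε := by
  intro T hT
  set B := (1 / 2) * ∑ i, (Emax - Ebar i) ^ 2
  have hdrift : ∀ t, ε * ∑ i, q i t ≤
      B + V * (Ψ - Dlb) + (lyapunov q t - lyapunov q (t + 1)) := fun t => by
    have hL := lyapunov_succ_sub_le q (fun i t => E i t - Ebar i) t fun i => by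
      rw [hqrec, add_sub_assoc]
    have hB : (1 / 2) * ∑ i, (E i t - Ebar i) ^ 2 ≤ B :=
      mul_le_mul_of_nonneg_left (sum_le_sum fun i _ => hE i t) (by norm_num)
    have hVD := mul_le_mul_of_nonneg_left (hD t) hV.le
    linarith [hdp t]
  have hsum := sum_range_le_of_drift_le hdrift T (lyapunov_eq_zero_of_forall q hq0)
    (lyapunov_nonneg q T)
  rw [← mul_sum] at hsum
  rw [div_le_div_iff₀ (by exact_mod_cast hT) hε]
  linarith

/-- deterministic core of Theorem 2's energy deficit bound for
OPEN: if the per-slot drift-plus-penalty value is dominated by a comparison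
policy with system delay `Ψ` and per-slot energy surplus `ε` at each SBS, then
the time-averaged total energy deficit is at most `(B + V(Ψ − D_lb))/ε`. -/
theorem stmt_14 (N : ℕ) (hN : 1 ≤ N) (V ε : ℝ) (hV : 0 < V) (hε : 0 < ε)
    (Emax Ψ Dlb : ℝ) (Ebar : Fin N → ℝ) (E : Fin N → ℕ → ℝ) (D : ℕ → ℝ)
    (hD : ∀ t, Dlb ≤ D t)
    (q : Fin N → ℕ → ℝ)
    (hq0 : ∀ i, q i 0 = 0)
    (hqrec : ∀ i t, q i (t + 1) = max (q i t + E i t - Ebar i) 0)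
    (hE : ∀ i t, (E i t - Ebar i) ^ 2 ≤ (Emax - Ebar i) ^ 2)
    (hdp : ∀ t, V * D t + (∑ i, q i t * (E i t - Ebar i)) ≤
      V * Ψ - ε * ∑ i, q i t) :
    ∀ T : ℕ, 1 ≤ T →
      (∑ t ∈ Finset.range T, ∑ i, q i t) / (T : ℝ) ≤
        (((1 / 2) * ∑ i, (Emax - Ebar i) ^ 2) + V * (Ψ - Dlb)) / ε :=
  stmt_14_general N V ε hV hε Emax Ψ Dlb Ebar E D hD q hq0 hqrec hE hdp
end

section
/- Let N ≥ 1, V > 0, ϱ ≥ 1, ε > 0, E_max ∈ ℝ, Ψ̃ ∈ ℝ, D_{lb} ∈ ℝ, and for i = 1,…,N let Ē_i ≥ 0 with Ē^{max} = max_i Ē_i, and assume ϱ·ε − (ϱ−1)·Ē^{max} > 0. Let E_i : ℕ → ℝ and D : ℕ → ℝ be sequences with D(t) ≥ D_{lb} for all t, and define q_i : ℕ → ℝ by q_i(0) = 0 and q_i(t+1) = max(q_i(t) + E_i(t) − Ē_i, 0). Assume: (i) (E_i(t) − Ē_i)² ≤ (E_max − Ē_i)² for all i, t; and (ii) for every t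 there exist comparison values D^L(t) ≤ Ψ̃ and E^L_i(t) ≤ Ē_i − ε such that V·D(t) + Σ_{i=1}^N q_i(t)·E_i(t) ≤ ϱ·( V·D^L(t) + Σ_{i=1}^N q_i(t)·E^L_i(t) ). Then for every T ≥ 1, (1/T)·Σ_{t=0}^{T−1} Σ_{i=1}^N q_i(t) ≤ (B + V·(ϱ·Ψ̃ − D_{lb}))/(ϱ·ε − (ϱ−1)·Ē^{max}), where B = (1/2)·Σ_{i=1}^N (E_max − Ē_i)². -/
/-!
Drift-plus-penalty with a price-of-anarchy factor. Take the Lyapunov function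
`L(t) = ½ Σᵢ qᵢ(t)²`. Since `max x 0 ^ 2 ≤ x ^ 2`, its one-slot drift is at most
`B + Σᵢ qᵢ(t)(Eᵢ(t) − Ēᵢ)`. The equilibrium bound against the comparison policy, together with
`qᵢ ≥ 0`, `Eᴸᵢ ≤ Ēᵢ − ε` and `Ēᵢ ≤ Ē^max`, bounds this queue-weighted sum by
`V(ϱΨ̃ − D_lb) − (ϱε − (ϱ−1)Ē^max) Σᵢ qᵢ(t)`. Summing over `T` slots, the drift telescopes
and `L(0) = 0 ≤ L(T)`.
-/

open Finset

lemma sq_max_zero_le_sq (x : ℝ) : max x 0 ^ 2 ≤ x ^ 2 := by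
  rcases le_total x 0 with hx | hx
  · rw [max_eq_right hx]
    exact (zero_pow two_ne_zero).trans_le (sq_nonneg x)
  · rw [max_eq_left hx]

lemma avg_le_div_of_drift_le {x L : ℕ → ℝ} {c K : ℝ} (hc : 0 < c) (hL0 : L 0 = 0)
    (hL : ∀ t, 0 ≤ L t) (hdrift : ∀ t, c * x t ≤ K + (L t - L (t + 1))) {T : ℕ} (hT : 0 < T) :
    (∑ t ∈ range T, x t) / T ≤ K / c := by
  have hsum : c * ∑ t ∈ range T, x t ≤ T * K :=
    calc c * ∑ t ∈ range T, x t ≤ ∑ t ∈ range T, (K + (L t - L (t + 1))) := by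
          rw [mul_sum]
          exact sum_le_sum fun t _ ↦ hdrift t
      _ = T * K - L T := by
          rw [sum_add_distrib, sum_range_sub', sum_const, card_range, nsmul_eq_mul, hL0]
          ring
      _ ≤ T * K := by linarith [hL T]
  rw [div_le_div_iff₀ (by exact_mod_cast hT) hc]
  linarith

section Slot

variable {ι : Type*} [Fintype ι]

lemma half_sum_sq_sub_le {q q' E Ebar : ι → ℝ} {Emax : ℝ}
    (hq' : ∀ i, q' i = max (q i + E i - Ebar i) 0)
    (hE : ∀ i, (E i - Ebar i) ^ 2 ≤ (Emax - Ebar i) ^ 2) :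
    (1 / 2) * ∑ i, q' i ^ 2 - (1 / 2) * ∑ i, q i ^ 2 ≤
      (1 / 2) * ∑ i, (Emax - Ebar i) ^ 2 + ∑ i, q i * (E i - Ebar i) := by
  have hi : ∀ i ∈ univ, q' i ^ 2 ≤ q i ^ 2 + (Emax - Ebar i) ^ 2 + 2 * (q i * (E i - Ebar i)) :=
    fun i _ ↦ by
      have := sq_max_zero_le_sq (q i + E i - Ebar i)
      rw [← hq' i] at this
      nlinarith [hE i]
  have := sum_le_sum hi
  simp only [sum_add_distrib, ← mul_sum] at this
  linarith

lemma mul_surplus_le {q EL Ebar Ebarmax ϱ ε : ℝ} (hq : 0 ≤ q) (hϱ : 1 ≤ ϱ)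
    (hEL : EL ≤ Ebar - ε) (hEbar : Ebar ≤ Ebarmax) :
    ϱ * (q * EL) - q * Ebar ≤ -((ϱ * ε - (ϱ - 1) * Ebarmax) * q) := by
  have h1 : ϱ * (q * EL) ≤ ϱ * (q * (Ebar - ε)) := by gcongr
  have h2 : (ϱ - 1) * q * Ebar ≤ (ϱ - 1) * q * Ebarmax := by
    gcongr
  linarith

lemma sum_mul_sub_le_of_poa {q E Ebar EL : ι → ℝ} {V ϱ ε Ψ Dlb D DL Ebarmax : ℝ}
    (hV : 0 < V) (hϱ : 1 ≤ ϱ) (hq : ∀ i, 0 ≤ q i) (hEbar : ∀ i, Ebar i ≤ Ebarmax)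
    (hD : Dlb ≤ D) (hDL : DL ≤ Ψ) (hEL : ∀ i, EL i ≤ Ebar i - ε)
    (hpoa : V * D + ∑ i, q i * E i ≤ ϱ * (V * DL + ∑ i, q i * EL i)) :
    ∑ i, q i * (E i - Ebar i) ≤
      V * (ϱ * Ψ - Dlb) - (ϱ * ε - (ϱ - 1) * Ebarmax) * ∑ i, q i := by
  have hsurplus : ∑ i, (ϱ * (q i * EL i) - q i * Ebar i) ≤
      ∑ i, -((ϱ * ε - (ϱ - 1) * Ebarmax) * q i) :=
    sum_le_sum fun i _ ↦ mul_surplus_le (hq i) hϱ (hEL i) (hEbar i)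
  simp only [sum_sub_distrib, sum_neg_distrib, ← mul_sum] at hsurplus
  have hdelay : ϱ * (V * DL) - V * D ≤ V * (ϱ * Ψ - Dlb) := by
    have : ϱ * DL ≤ ϱ * Ψ := by gcongr
    nlinarith
  simp only [mul_sub, sum_sub_distrib]
  linarith

end Slot

theorem stmt_16_general (N : ℕ) (V ϱ ε : ℝ) (hV : 0 < V) (hϱ : 1 ≤ ϱ)
    (Emax Ψ Dlb : ℝ)
    (Ebar : Fin N → ℝ)
    (Ebarmax : ℝ) (hEbarmax : IsGreatest (Set.range Ebar) Ebarmax)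
    (hden : 0 < ϱ * ε - (ϱ - 1) * Ebarmax)
    (E : Fin N → ℕ → ℝ) (D : ℕ → ℝ) (hD : ∀ t, Dlb ≤ D t)
    (q : Fin N → ℕ → ℝ)
    (hq0 : ∀ i, q i 0 = 0)
    (hqrec : ∀ i t, q i (t + 1) = max (q i t + E i t - Ebar i) 0)
    (hE : ∀ i t, (E i t - Ebar i) ^ 2 ≤ (Emax - Ebar i) ^ 2)
    (hdp : ∀ t, ∃ (DL : ℝ) (EL : Fin N → ℝ),
      DL ≤ Ψ ∧
      (∀ i, EL i ≤ Ebar i - ε) ∧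
      V * D t + (∑ i, q i t * E i t) ≤ ϱ * (V * DL + ∑ i, q i t * EL i)) :
    ∀ T : ℕ, 1 ≤ T →
      (∑ t ∈ Finset.range T, ∑ i, q i t) / (T : ℝ) ≤
        (((1 / 2) * ∑ i, (Emax - Ebar i) ^ 2) + V * (ϱ * Ψ - Dlb)) /
          (ϱ * ε - (ϱ - 1) * Ebarmax) := by
  have hq : ∀ i t, 0 ≤ q i t := fun i t ↦ by
    cases t with
    | zero => exact (hq0 i).ge
    | succ t => exact (hqrec i t).symm ▸ le_max_right _ _
  intro T hT
  refine avg_le_div_of_drift_le (L := fun t ↦ (1 / 2) * ∑ i, q i t ^ 2) hden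
    (by simp [hq0]) (fun t ↦ by positivity) (fun t ↦ ?_) hT
  obtain ⟨DL, EL, hDL, hEL, hpoa⟩ := hdp t
  have hdrift := half_sum_sq_sub_le (fun i ↦ hqrec i t) (fun i ↦ hE i t)
  have hpenalty := sum_mul_sub_le_of_poa hV hϱ (fun i ↦ hq i t)
    (fun i ↦ hEbarmax.2 (Set.mem_range_self i)) (hD t) hDL hEL hpoa
  linarith

/-- deterministic core of Theorem 6's energy deficit bound for
OPEN-Autonomous: under a per-slot price-of-anarchy bound `ϱ` relative to a
comparison policy with delay at most `Ψ̃` and per-slot energy surplus `ε`, the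
time-averaged total energy deficit is at most
`(B + V(ϱ·Ψ̃ − D_lb))/(ϱ·ε − (ϱ−1)·Ē^max)`. -/
theorem stmt_16 (N : ℕ) (hN : 1 ≤ N) (V ϱ ε : ℝ) (hV : 0 < V) (hϱ : 1 ≤ ϱ)
    (hε : 0 < ε) (Emax Ψ Dlb : ℝ)
    (Ebar : Fin N → ℝ) (hEbar : ∀ i, 0 ≤ Ebar i)
    (Ebarmax : ℝ) (hEbarmax : IsGreatest (Set.range Ebar) Ebarmax)
    (hden : 0 < ϱ * ε - (ϱ - 1) * Ebarmax)
    (E : Fin N → ℕ → ℝ) (D : ℕ → ℝ) (hD : ∀ t, Dlb ≤ D t)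
    (q : Fin N → ℕ → ℝ)
    (hq0 : ∀ i, q i 0 = 0)
    (hqrec : ∀ i t, q i (t + 1) = max (q i t + E i t - Ebar i) 0)
    (hE : ∀ i t, (E i t - Ebar i) ^ 2 ≤ (Emax - Ebar i) ^ 2)
    (hdp : ∀ t, ∃ (DL : ℝ) (EL : Fin N → ℝ),
      DL ≤ Ψ ∧
      (∀ i, EL i ≤ Ebar i - ε) ∧
      V * D t + (∑ i, q i t * E i t) ≤ ϱ * (V * DL + ∑ i, q i t * EL i)) :
    ∀ T : ℕ, 1 ≤ T →
      (∑ t ∈ Finset.range T, ∑ i, q i t) / (T : ℝ) ≤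
        (((1 / 2) * ∑ i, (Emax - Ebar i) ^ 2) + V * (ϱ * Ψ - Dlb)) /
          (ϱ * ε - (ϱ - 1) * Ebarmax) :=
  stmt_16_general N V ϱ ε hV hϱ Emax Ψ Dlb Ebar Ebarmax hEbarmax hden E D hD q hq0 hqrec hE hdp
end

section
/- Let N ≥ 1, V > 0, κ > 0, τ > 0, φ_i ≥ 0, μ_i > 0, q_i ≥ 0 for i = 1,…,N, and let β ∈ ℝ^{N×N} satisfy β_{ij} ≥ 0, Σ_j β_{ij} = φ_i for all i, ω_j(β) = Σ_i β_{ij} < μ_j for all j, and τ·λ(β) < 1 where λ(β) = Σ_i Σ_{j≠i} β_{ij} and λ_i(β) = Σ_{j≠i} β_{ij} = φ_i − β_{ii}. Then Σ_{i=1}^N [ V·Σ_{j=1}^N β_{ij}/(μ_j − ω_j(β)) + V·τ·λ_i(β)/(1 − τ·λ(β)) + κ·q_i·ω_i(β) ] = Σ_{j=1}^N V·ω_j(β)/(μ_j − ω_j(β)) + V·τ·λ(β)/(1 − τ·λ(β)) + Σ_{j=1}^N κ·q_j·ω_j(β). In particular, the decision-dependent part of the per-slot objective depends on β only through the post-offloading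 workloads (ω_1(β),…,ω_N(β)) and the total LAN traffic λ(β), so any two feasible profiles with equal ω and λ have equal objective value. -/
open Finset

noncomputable section

namespace PeerOffloading

variable {ι : Type*} [Fintype ι]

/-- The paper's `ω j`. -/
def workload (β : ι → ι → ℝ) (j : ι) : ℝ := ∑ i, β i j

/-- The paper's `λ`. -/
def lanTraffic [DecidableEq ι] (β : ι → ι → ℝ) : ℝ := ∑ i, ∑ j ∈ univ.erase i, β i j

def offloadCost [DecidableEq ι] (V κ τ : ℝ) (μ q : ι → ℝ) (β : ι → ι → ℝ) : ℝ :=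
  ∑ i, (V * (∑ j, β i j / (μ j - workload β j)) +
    V * τ * (∑ j ∈ univ.erase i, β i j) / (1 - τ * lanTraffic β) +
    κ * q i * workload β i)

def workloadCost (V κ τ : ℝ) (μ q ω : ι → ℝ) (lan : ℝ) : ℝ :=
  (∑ j, V * ω j / (μ j - ω j)) + V * τ * lan / (1 - τ * lan) + ∑ j, κ * q j * ω j

/-- Summing the per-SBS costs first over the senders `i` turns the computation delays into
`ω j / (μ j - ω j)` and the LAN shares into the whole LAN delay. -/
theorem offloadCost_eq_workloadCost [DecidableEq ι] (V κ τ : ℝ) (μ q : ι → ℝ)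
    (β : ι → ι → ℝ) :
    offloadCost V κ τ μ q β = workloadCost V κ τ μ q (workload β) (lanTraffic β) := by
  have computation : ∑ i, V * ∑ j, β i j / (μ j - workload β j) =
      ∑ j, V * workload β j / (μ j - workload β j) := by
    simp only [← mul_sum, mul_div_assoc]
    rw [sum_comm]
    simp only [← sum_div, workload]
  have lan : ∑ i, V * τ * (∑ j ∈ univ.erase i, β i j) / (1 - τ * lanTraffic β) =
      V * τ * lanTraffic β / (1 - τ * lanTraffic β) := by
    rw [← sum_div, ← mul_sum, lanTraffic]
  rw [offloadCost, workloadCost, sum_add_distrib, sum_add_distrib, computation, lan]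

end PeerOffloading

end

open PeerOffloading

theorem stmt_17_general (N : ℕ) (V κ τ : ℝ)
    (φ μ q : Fin N → ℝ)
    (β : Fin N → Fin N → ℝ) :
    (∑ i, (V * (∑ j, β i j / (μ j - ∑ k, β k j)) +
           V * τ * (∑ j ∈ Finset.univ.erase i, β i j) /
             (1 - τ * (∑ k, ∑ l ∈ Finset.univ.erase k, β k l)) +
           κ * q i * (∑ k, β k i))) =
      (∑ j, V * (∑ k, β k j) / (μ j - ∑ k, β k j)) +
        V * τ * (∑ k, ∑ l ∈ Finset.univ.erase k, β k l) /
          (1 - τ * (∑ k, ∑ l ∈ Finset.univ.erase k, β k l)) +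
        (∑ j, κ * q j * (∑ k, β k j)) ∧
    ∀ β' : Fin N → Fin N → ℝ,
      (∀ i j, 0 ≤ β' i j) → (∀ i, (∑ j, β' i j) = φ i) →
      (∀ j, (∑ i, β' i j) < μ j) →
      τ * (∑ i, ∑ j ∈ Finset.univ.erase i, β' i j) < 1 →
      (∀ j, (∑ i, β' i j) = ∑ i, β i j) →
      (∑ i, ∑ j ∈ Finset.univ.erase i, β' i j) =
        (∑ i, ∑ j ∈ Finset.univ.erase i, β i j) →
      (∑ i, (V * (∑ j, β' i j / (μ j - ∑ k, β' k j)) +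
             V * τ * (∑ j ∈ Finset.univ.erase i, β' i j) /
               (1 - τ * (∑ k, ∑ l ∈ Finset.univ.erase k, β' k l)) +
             κ * q i * (∑ k, β' k i))) =
        (∑ i, (V * (∑ j, β i j / (μ j - ∑ k, β k j)) +
               V * τ * (∑ j ∈ Finset.univ.erase i, β i j) /
                 (1 - τ * (∑ k, ∑ l ∈ Finset.univ.erase k, β k l)) +
               κ * q i * (∑ k, β k i))) := by
  refine ⟨offloadCost_eq_workloadCost V κ τ μ q β, fun β' _ _ _ _ hω hlan => ?_⟩
  change offloadCost V κ τ μ q β' = offloadCost V κ τ μ q β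
  have hω' : workload β' = workload β := funext hω
  have hlan' : lanTraffic β' = lanTraffic β := hlan
  rw [offloadCost_eq_workloadCost, offloadCost_eq_workloadCost, hω', hlan']

/-- the rearrangement identity (equation (10) of the paper): the
decision-dependent part of the per-slot objective, written as a sum of per-SBS
costs, equals a function of the post-offloading workloads `ω_j(β)` and the
total LAN traffic `λ(β)` only; hence any two feasible profiles with equal `ω`
and `λ` have equal objective value. -/
theorem stmt_17 (N : ℕ) (hN : 1 ≤ N) (V κ τ : ℝ) (hV : 0 < V) (hκ : 0 < κ) (hτ : 0 < τ)
    (φ μ q : Fin N → ℝ) (hφ : ∀ i, 0 ≤ φ i) (hμ : ∀ i, 0 < μ i) (hq : ∀ i, 0 ≤ q i)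
    (β : Fin N → Fin N → ℝ)
    (hpos : ∀ i j, 0 ≤ β i j)
    (hcons : ∀ i, (∑ j, β i j) = φ i)
    (hstab : ∀ j, (∑ i, β i j) < μ j)
    (hlan : τ * (∑ i, ∑ j ∈ Finset.univ.erase i, β i j) < 1) :
    (∑ i, (V * (∑ j, β i j / (μ j - ∑ k, β k j)) +
           V * τ * (∑ j ∈ Finset.univ.erase i, β i j) /
             (1 - τ * (∑ k, ∑ l ∈ Finset.univ.erase k, β k l)) +
           κ * q i * (∑ k, β k i))) =
      (∑ j, V * (∑ k, β k j) / (μ j - ∑ k, β k j)) +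
        V * τ * (∑ k, ∑ l ∈ Finset.univ.erase k, β k l) /
          (1 - τ * (∑ k, ∑ l ∈ Finset.univ.erase k, β k l)) +
        (∑ j, κ * q j * (∑ k, β k j)) ∧
    ∀ β' : Fin N → Fin N → ℝ,
      (∀ i j, 0 ≤ β' i j) → (∀ i, (∑ j, β' i j) = φ i) →
      (∀ j, (∑ i, β' i j) < μ j) →
      τ * (∑ i, ∑ j ∈ Finset.univ.erase i, β' i j) < 1 →
      (∀ j, (∑ i, β' i j) = ∑ i, β i j) →
      (∑ i, ∑ j ∈ Finset.univ.erase i, β' i j) =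
        (∑ i, ∑ j ∈ Finset.univ.erase i, β i j) →
      (∑ i, (V * (∑ j, β' i j / (μ j - ∑ k, β' k j)) +
             V * τ * (∑ j ∈ Finset.univ.erase i, β' i j) /
               (1 - τ * (∑ k, ∑ l ∈ Finset.univ.erase k, β' k l)) +
             κ * q i * (∑ k, β' k i))) =
        (∑ i, (V * (∑ j, β i j / (μ j - ∑ k, β k j)) +
               V * τ * (∑ j ∈ Finset.univ.erase i, β i j) /
                 (1 - τ * (∑ k, ∑ l ∈ Finset.univ.erase k, β k l)) +
               κ * q i * (∑ k, β k i))) :=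
  stmt_17_general N V κ τ φ μ q β
end
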